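/- arXiv:2408.08465 — 5 statements merged into one kernel-verified Lean document; each statement's English description precedes it below -/
import Mathlib

section
/- Let (X_i)_{i≥1} be a sequence of independent standard normal N(0,1) random variables and let α > 1/2, and set λ(i) = i^{-α} and r = 1/(2α − 1). Then there exist a constant B₁ > 0 and ε₀ ∈ (0,1] such that for all 0 < ε ≤ ε₀: P( (Σ_{i=1}^∞ λ(i)² X_i²)^{1/2} ≤ ε ) ≤ B₁ · ε^{r(1−α)} · exp( −(α − 1/2) · ε^{−2r} ). -/
open MeasureTheory Filter Real ProbabilityTheory Finset
open scoped ENNReal Topology Nat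

/-!
Chernoff: for `t ≥ 0`, `P(∑ λᵢ² Xᵢ² ≤ a) ≤ e^{ta} ∏ᵢ (1 + 2tλᵢ²)^{-1/2}`, because
`E e^{-sX²} = (1 + 2s)^{-1/2}` for a standard Gaussian `X`. Put `y = ε^{-2r}`, so that
`ε² = y^{1-2α}`, and take `t = y^{2α}/2`: then `ta = y/2` and `1 + 2tλᵢ² = 1 + (y/i)^{2α}`.
For `N = ⌊y⌋`, the first `N` factors are at most `(i/y)^α`, with product `(N!/y^N)^α`,
which is at most `(√y e^{2-y})^α` by Stirling; each of the next `N` factors is at most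
`(1 + 4^{-α})^{-1/2}`. Altogether the bound is `y^{(α-1)/2} e^{-(α-1/2)y}` times
`C √y e^{-δy}` with `δ > 0`, and the latter factor is `≤ 1` for large `y`.
-/

lemma mgf_sq_gaussianReal {t : ℝ} (ht : t < 1 / 2) :
    mgf (fun x ↦ x ^ 2) (gaussianReal 0 1) t = (√(1 - 2 * t))⁻¹ := by
  have hb : 0 < 1 / 2 - t := by linarith
  calc mgf (fun x ↦ x ^ 2) (gaussianReal 0 1) t
      = ∫ x, (√(2 * π))⁻¹ * exp (-(1 / 2 - t) * x ^ 2) := by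
        rw [mgf, integral_gaussianReal_eq_integral_smul one_ne_zero]
        congr 1 with x
        rw [gaussianPDFReal, smul_eq_mul, mul_assoc, ← exp_add]
        push_cast
        ring_nf
    _ = (√(1 - 2 * t))⁻¹ := by
        rw [integral_const_mul, integral_gaussian, ← sqrt_inv, ← sqrt_mul (by positivity),
          ← sqrt_inv]
        congr 1
        field_simp

/-- `stirlingSeq (n + 1)` decreases from `stirlingSeq 1 = e / √2`. -/
lemma factorial_le_exp_one_mul_sqrt_mul_pow {n : ℕ} (hn : n ≠ 0) :
    (n ! : ℝ) ≤ exp 1 * √n * (n / exp 1) ^ n := by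
  obtain ⟨m, rfl⟩ := Nat.exists_eq_succ_of_ne_zero hn
  have h := Stirling.stirlingSeq'_antitone (Nat.zero_le m)
  simp only [Function.comp_apply, Nat.succ_eq_add_one, zero_add, Stirling.stirlingSeq_one] at h
  rw [Stirling.stirlingSeq, div_le_div_iff₀ (by positivity) (by positivity)] at h
  calc ((m + 1) ! : ℝ) = (m + 1) ! * √2 / √2 := by field_simp
    _ ≤ exp 1 * (√(2 * ↑(m + 1)) * (↑(m + 1) / exp 1) ^ (m + 1)) / √2 := by gcongr
    _ = _ := by rw [sqrt_mul zero_le_two]; field_simp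

lemma inv_sqrt_one_add_rpow_two_mul_le {x : ℝ} (hx : 0 < x) (α : ℝ) :
    (√(1 + x ^ (2 * α)))⁻¹ ≤ x ^ (-α) := by
  have hsq : x ^ (2 * α) = (x ^ α) ^ 2 := by
    rw [mul_comm, rpow_mul hx.le, rpow_two]
  rw [rpow_neg hx.le]
  refine inv_anti₀ (by positivity) ?_
  calc x ^ α = √(x ^ (2 * α)) := by rw [hsq, sqrt_sq (by positivity)]
    _ ≤ √(1 + x ^ (2 * α)) := sqrt_le_sqrt (by linarith)

lemma inv_sqrt_one_add_le_exp {x β : ℝ} (hβ : 0 ≤ β) (hβx : β ≤ x) :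
    (√(1 + x))⁻¹ ≤ exp (-(log (1 + β) / 2)) := by
  rw [exp_neg, exp_half, exp_log (by linarith)]
  exact inv_anti₀ (by positivity) (sqrt_le_sqrt (by linarith))

lemma prod_range_inv_sqrt_le_factorial_div_pow {y : ℝ} (hy : 0 < y) (α : ℝ) (N : ℕ) :
    ∏ i ∈ range N, (√(1 + (y / (i + 1)) ^ (2 * α)))⁻¹ ≤ (N ! / y ^ N) ^ α := by
  calc ∏ i ∈ range N, (√(1 + (y / (i + 1)) ^ (2 * α)))⁻¹
      ≤ ∏ i ∈ range N, ((i + 1) / y) ^ α := by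
        refine prod_le_prod (fun i _ ↦ by positivity) fun i _ ↦ ?_
        calc (√(1 + (y / (i + 1)) ^ (2 * α)))⁻¹ ≤ (y / (i + 1)) ^ (-α) :=
              inv_sqrt_one_add_rpow_two_mul_le (by positivity) α
          _ = ((i + 1) / y) ^ α := by
              rw [rpow_neg (by positivity), ← inv_rpow (by positivity), inv_div]
    _ = (N ! / y ^ N) ^ α := by
        rw [finsetProd_rpow _ _ fun i _ ↦ by positivity, prod_div_distrib, prod_const,
          card_range, ← prod_range_add_one_eq_factorial]
        push_cast
        rfl

lemma prod_Ico_inv_sqrt_le_exp {y α : ℝ} (hα : 0 ≤ α) {N : ℕ} (hN : (N : ℝ) ≤ y) :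
    ∏ i ∈ Ico N (2 * N), (√(1 + (y / (i + 1)) ^ (2 * α)))⁻¹
      ≤ exp (-(log (1 + 2⁻¹ ^ (2 * α)) / 2 * N)) := by
  calc ∏ i ∈ Ico N (2 * N), (√(1 + (y / (i + 1)) ^ (2 * α)))⁻¹
      ≤ ∏ i ∈ Ico N (2 * N), exp (-(log (1 + 2⁻¹ ^ (2 * α)) / 2)) := by
        refine prod_le_prod (fun i _ ↦ by positivity) fun i hi ↦ ?_
        have hi2 : (i : ℝ) + 1 ≤ 2 * N := by
          exact_mod_cast Nat.succ_le_of_lt (mem_Ico.1 hi).2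
        refine inv_sqrt_one_add_le_exp (by positivity)
          (rpow_le_rpow (by norm_num) ?_ (by linarith))
        rw [le_div_iff₀ (by positivity)]
        linarith
    _ = exp (-(log (1 + 2⁻¹ ^ (2 * α)) / 2 * N)) := by
        rw [prod_const, Nat.card_Ico, ← exp_nat_mul]
        congr 1
        push_cast [two_mul, Nat.add_sub_cancel]
        ring

lemma factorial_floor_div_pow_le {y : ℝ} (hy : 1 ≤ y) :
    (⌊y⌋₊ ! / y ^ ⌊y⌋₊ : ℝ) ≤ √y * exp (2 - y) := by
  set N := ⌊y⌋₊
  have hN : (N : ℝ) ≤ y := Nat.floor_le (by linarith)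
  have hN1 : y < N + 1 := Nat.lt_floor_add_one y
  have hN0 : N ≠ 0 := Nat.one_le_iff_ne_zero.1 ((Nat.one_le_floor_iff y).2 hy)
  calc (N ! / y ^ N : ℝ) ≤ N ! / N ^ N := by gcongr
    _ ≤ exp 1 * √N * (N / exp 1) ^ N / N ^ N := by
        gcongr; exact factorial_le_exp_one_mul_sqrt_mul_pow hN0
    _ = √N * exp (1 - N) := by
        rw [div_pow, ← exp_nat_mul, mul_one, sub_eq_add_neg, exp_add, exp_neg]
        field_simp
    _ ≤ √y * exp (2 - y) :=
        mul_le_mul (sqrt_le_sqrt hN) (exp_le_exp.2 (by linarith)) (by positivity) (by positivity)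

lemma prod_range_two_mul_floor_inv_sqrt_le {y α : ℝ} (hy : 1 ≤ y) (hα : 0 ≤ α) :
    ∏ i ∈ range (2 * ⌊y⌋₊), (√(1 + (y / (i + 1)) ^ (2 * α)))⁻¹
      ≤ (√y * exp (2 - y)) ^ α * exp (-(log (1 + 2⁻¹ ^ (2 * α)) / 2 * (y - 1))) := by
  set N := ⌊y⌋₊
  have hN : (N : ℝ) ≤ y := Nat.floor_le (by linarith)
  have hN1 : y - 1 ≤ N := by linarith [Nat.lt_floor_add_one y]
  have hlog : 0 ≤ log (1 + 2⁻¹ ^ (2 * α)) := log_nonneg (by simp; positivity)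
  rw [← prod_range_mul_prod_Ico _ (by omega : N ≤ 2 * N)]
  gcongr
  · exact (prod_range_inv_sqrt_le_factorial_div_pow (by linarith) α N).trans
      (rpow_le_rpow (by positivity) (factorial_floor_div_pow_le hy) hα)
  · exact (prod_Ico_inv_sqrt_le_exp hα hN).trans
      (exp_le_exp.2 (neg_le_neg (mul_le_mul_of_nonneg_left hN1 (by positivity))))

section

variable {Ω : Type*} [MeasurableSpace Ω] {μ : Measure Ω}

lemma ae_summable_mul_sq {X : ℕ → Ω → ℝ} (hXmeas : ∀ i, Measurable (X i))
    {ν : Measure ℝ} (hν : MemLp id 2 ν) (hXν : ∀ i, μ.map (X i) = ν) {c : ℕ → ℝ} (hc : Summable c) :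
    ∀ᵐ ω ∂μ, Summable fun i ↦ c i * X i ω ^ 2 := by
  have hK : eLpNorm (fun x : ℝ ↦ x ^ 2) 1 ν ≠ ∞ :=
    (memLp_one_iff_integrable.2 hν.integrable_sq).eLpNorm_ne_top
  have hnorm (i : ℕ) : eLpNorm (fun ω ↦ c i * X i ω ^ 2) 1 μ
      = ‖c i‖ₑ * eLpNorm (fun x : ℝ ↦ x ^ 2) 1 ν := by
    rw [← hXν i, eLpNorm_map_measure (by fun_prop) (hXmeas i).aemeasurable,
      ← eLpNorm_const_smul]
    rfl
  have hsum : ∑' i, eLpNorm (fun ω ↦ c i * X i ω ^ 2) 1 μ ≠ ∞ := by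
    simp_rw [hnorm, ENNReal.tsum_mul_right]
    exact ENNReal.mul_ne_top (tsum_enorm_ne_top_iff_summable_norm.2 hc.norm) hK
  filter_upwards [summable_norm_of_tsum_eLpNorm_ne_top le_rfl (fun i ↦ by fun_prop) hsum]
    with ω hω using hω.of_norm

lemma mgf_mul_sq_of_map_eq_gaussianReal {Y : Ω → ℝ} (hY : Measurable Y)
    (hYgauss : μ.map Y = gaussianReal 0 1) {c t : ℝ} (hct : c * t < 1 / 2) :
    mgf (fun ω ↦ c * Y ω ^ 2) μ t = (√(1 - 2 * (c * t)))⁻¹ := by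
  rw [mgf_const_mul, ← mgf_sq_gaussianReal hct, ← hYgauss,
    mgf_map hY.aemeasurable (by fun_prop)]
  rfl

variable [IsProbabilityMeasure μ]

lemma measureReal_sum_mul_sq_le_le {ι : Type*} {X : ι → Ω → ℝ}
    (hXmeas : ∀ i, Measurable (X i)) (hXindep : iIndepFun X μ)
    (hXgauss : ∀ i, μ.map (X i) = gaussianReal 0 1) {c : ι → ℝ} (hc : ∀ i, 0 ≤ c i)
    {t : ℝ} (ht : 0 ≤ t) (a : ℝ) (s : Finset ι) :
    μ.real {ω | ∑ i ∈ s, c i * X i ω ^ 2 ≤ a}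
      ≤ exp (t * a) * ∏ i ∈ s, (√(1 + 2 * t * c i))⁻¹ := by
  set Y : ι → Ω → ℝ := fun i ω ↦ c i * X i ω ^ 2
  have hYmeas (i : ι) : Measurable (Y i) := by fun_prop
  have hYindep : iIndepFun Y μ :=
    hXindep.comp (fun i x ↦ c i * x ^ 2) fun i ↦ by fun_prop
  have hS (ω : Ω) : (∑ i ∈ s, Y i) ω = ∑ i ∈ s, c i * X i ω ^ 2 := Finset.sum_apply ..
  have hint : Integrable (fun ω ↦ exp (-t * (∑ i ∈ s, Y i) ω)) μ := by
    refine Integrable.mono' (integrable_const 1) (by fun_prop) (ae_of_all _ fun ω ↦ ?_)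
    rw [norm_of_nonneg (exp_pos _).le, exp_le_one_iff, hS]
    exact mul_nonpos_of_nonpos_of_nonneg (neg_nonpos.2 ht)
      (Finset.sum_nonneg fun i _ ↦ mul_nonneg (hc i) (sq_nonneg _))
  calc μ.real {ω | ∑ i ∈ s, c i * X i ω ^ 2 ≤ a}
      = μ.real {ω | (∑ i ∈ s, Y i) ω ≤ a} := by simp_rw [hS]
    _ ≤ exp (t * a) * mgf (∑ i ∈ s, Y i) μ (-t) := by
        simpa using measure_le_le_exp_mul_mgf a (neg_nonpos.2 ht) hint
    _ = exp (t * a) * ∏ i ∈ s, (√(1 + 2 * t * c i))⁻¹ := by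
        rw [hYindep.mgf_sum hYmeas]
        congr 1
        refine Finset.prod_congr rfl fun i _ ↦ ?_
        rw [mgf_mul_sq_of_map_eq_gaussianReal (hXmeas i) (hXgauss i)
          (by nlinarith [hc i] : c i * -t < 1 / 2)]
        ring_nf

lemma measureReal_tsum_mul_sq_le_le {X : ℕ → Ω → ℝ} (hXmeas : ∀ i, Measurable (X i))
    (hXindep : iIndepFun X μ) (hXgauss : ∀ i, μ.map (X i) = gaussianReal 0 1)
    {c : ℕ → ℝ} (hc : ∀ i, 0 ≤ c i) (hcs : Summable c) {t : ℝ} (ht : 0 ≤ t) (a : ℝ)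
    (s : Finset ℕ) :
    μ.real {ω | ∑' i, c i * X i ω ^ 2 ≤ a}
      ≤ exp (t * a) * ∏ i ∈ s, (√(1 + 2 * t * c i))⁻¹ := by
  refine le_trans (ENNReal.toReal_mono (measure_ne_top _ _) (measure_mono_ae ?_))
    (measureReal_sum_mul_sq_le_le hXmeas hXindep hXgauss hc ht a s)
  filter_upwards [ae_summable_mul_sq hXmeas (memLp_id_gaussianReal 2) hXgauss hcs]
    with ω hω hle
  exact (hω.sum_le_tsum s fun i _ ↦ mul_nonneg (hc i) (sq_nonneg _)).trans hle

lemma eventually_measureReal_tsum_rpow_mul_sq_le {X : ℕ → Ω → ℝ} {α : ℝ}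
    (hXmeas : ∀ i, Measurable (X i)) (hXindep : iIndepFun X μ)
    (hXgauss : ∀ i, μ.map (X i) = gaussianReal 0 1) (hα : 1 / 2 < α) :
    ∀ᶠ y in atTop,
      μ.real {ω | ∑' i : ℕ, ((i : ℝ) + 1) ^ (-(2 * α)) * X i ω ^ 2 ≤ y ^ (1 - 2 * α)}
      ≤ y ^ ((α - 1) / 2) * exp (-(α - 1 / 2) * y) := by
  set δ := log (1 + 2⁻¹ ^ (2 * α)) / 2
  have hδ : 0 < δ := by
    have : 0 < (2⁻¹ : ℝ) ^ (2 * α) := by positivity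
    exact half_pos (log_pos (by linarith))
  have hcs : Summable fun i : ℕ ↦ ((i : ℝ) + 1) ^ (-(2 * α)) := by
    exact_mod_cast (summable_nat_add_iff 1).2
      (summable_nat_rpow.2 (by linarith : -(2 * α) < -1))
  have hsmall : ∀ᶠ y in atTop, exp (2 * α + δ) * (y ^ (1 / 2 : ℝ) * exp (-δ * y)) ≤ 1 := by
    have h := (tendsto_rpow_mul_exp_neg_mul_atTop_nhds_zero (1 / 2) δ hδ).const_mul
      (exp (2 * α + δ))
    rw [mul_zero] at h
    exact h.eventually_le_const one_pos
  filter_upwards [hsmall, eventually_ge_atTop 1] with y hsmall hy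
  have hy0 : 0 < y := by linarith
  calc _ ≤ exp (y ^ (2 * α) / 2 * y ^ (1 - 2 * α)) * ∏ i ∈ range (2 * ⌊y⌋₊),
        (√(1 + 2 * (y ^ (2 * α) / 2) * ((i : ℝ) + 1) ^ (-(2 * α))))⁻¹ :=
        measureReal_tsum_mul_sq_le_le hXmeas hXindep hXgauss (fun i ↦ by positivity) hcs
          (by positivity) _ _
    _ = exp (y / 2) * ∏ i ∈ range (2 * ⌊y⌋₊), (√(1 + (y / (i + 1)) ^ (2 * α)))⁻¹ := by
        congr 1
        · rw [div_mul_eq_mul_div, ← rpow_add hy0]; norm_num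
        · refine prod_congr rfl fun i _ ↦ ?_
          rw [div_rpow hy0.le (by positivity), rpow_neg (by positivity)]
          ring_nf
    _ ≤ exp (y / 2) * ((√y * exp (2 - y)) ^ α * exp (-(δ * (y - 1)))) := by
        gcongr
        exact prod_range_two_mul_floor_inv_sqrt_le hy (by linarith)
    _ = exp (2 * α + δ) * (y ^ (1 / 2 : ℝ) * exp (-δ * y))
          * (y ^ ((α - 1) / 2) * exp (-(α - 1 / 2) * y)) := by
        have hpow : (√y) ^ α = y ^ (1 / 2 : ℝ) * y ^ ((α - 1) / 2) := by
          rw [sqrt_eq_rpow, ← rpow_mul hy0.le, ← rpow_add hy0]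
          ring_nf
        have hexp : exp (y / 2) * exp (2 - y) ^ α * exp (-(δ * (y - 1)))
            = exp (2 * α + δ) * exp (-δ * y) * exp (-(α - 1 / 2) * y) := by
          simp only [← exp_mul, ← exp_add]
          ring_nf
        rw [mul_rpow (by positivity) (by positivity), hpow]
        linear_combination y ^ (1 / 2 : ℝ) * y ^ ((α - 1) / 2) * hexp
    _ ≤ y ^ ((α - 1) / 2) * exp (-(α - 1 / 2) * y) :=
        mul_le_of_le_one_left (by positivity) hsmall

end

/-- **small ball upper estimate.** For iid standard normal
`(X_i)_{i≥1}`, `α > 1/2`, `λ(i) = i^{-α}`, `r = 1/(2α−1)`, there exist `B₁ > 0`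
and `ε₀ ∈ (0,1]` such that for all `0 < ε ≤ ε₀`,
`P((Σ_{i≥1} λ(i)² X_i²)^{1/2} ≤ ε) ≤ B₁ ε^{r(1−α)} exp(−(α−1/2) ε^{−2r})`.
Here `X i` for `i : ℕ` stands for the `(i+1)`-st variable, so
`λ(i+1)² = ((i:ℝ)+1)^{-2α}`. -/
theorem gaussian_small_ball_upper
    {Ω : Type*} [MeasurableSpace Ω] (μ : Measure Ω) [IsProbabilityMeasure μ]
    (X : ℕ → Ω → ℝ) (hXmeas : ∀ i, Measurable (X i))
    (hXindep : iIndepFun X μ)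
    (hXgauss : ∀ i, Measure.map (X i) μ = gaussianReal 0 1)
    (α : ℝ) (hα : 1 / 2 < α) (r : ℝ) (hr : r = 1 / (2 * α - 1)) :
    ∃ B₁ > (0 : ℝ), ∃ ε₀ ∈ Set.Ioc (0 : ℝ) 1, ∀ ε : ℝ, 0 < ε → ε ≤ ε₀ →
      (μ {ω | Real.sqrt (∑' i : ℕ, ((i : ℝ) + 1) ^ (-(2 * α)) * (X i ω) ^ 2)
          ≤ ε}).toReal
        ≤ B₁ * ε ^ (r * (1 - α)) * Real.exp (-(α - 1 / 2) * ε ^ (-(2 * r))) := by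
  have hr0 : 0 < r := by rw [hr]; exact one_div_pos.2 (by linarith)
  have hrα : r * (2 * α - 1) = 1 := by rw [hr]; field_simp [(by linarith : 2 * α - 1 ≠ 0)]
  have hε : ∀ᶠ ε in 𝓝[>] 0,
      μ.real {ω | √(∑' i : ℕ, ((i : ℝ) + 1) ^ (-(2 * α)) * X i ω ^ 2) ≤ ε}
      ≤ ε ^ (r * (1 - α)) * exp (-(α - 1 / 2) * ε ^ (-(2 * r))) := by
    filter_upwards [(tendsto_rpow_neg_nhdsGT_zero (by linarith : -(2 * r) < 0)).eventually
      (eventually_measureReal_tsum_rpow_mul_sq_le hXmeas hXindep hXgauss hα),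
      self_mem_nhdsWithin] with ε hbound (hε0 : 0 < ε)
    have hsq : (ε ^ (-(2 * r))) ^ (1 - 2 * α) = ε ^ 2 := by
      rw [← rpow_mul hε0.le, ← rpow_natCast]
      congr 1
      linear_combination 2 * hrα
    have hpow : (ε ^ (-(2 * r))) ^ ((α - 1) / 2) = ε ^ (r * (1 - α)) := by
      rw [← rpow_mul hε0.le]
      ring_nf
    simpa only [hsq, hpow, sqrt_le_left hε0.le] using hbound
  obtain ⟨u, hu, hsub⟩ := mem_nhdsGT_iff_exists_Ioc_subset.1 hε
  refine ⟨1, one_pos, min u 1, ⟨lt_min hu one_pos, min_le_right u 1⟩, fun ε hε0 hεu ↦ ?_⟩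
  rw [one_mul]
  exact hsub ⟨hε0, hεu.trans (min_le_left u 1)⟩
end

section
/- Let ν, λ > 0, let A be the operator on ℓ²(ℤ,ℝ) given by (Au)_i = −u_{i−1} + 2u_i − u_{i+1}, let g ∈ ℓ²(ℤ,ℝ), and let f : ℝ → ℝ be continuously differentiable with f(0) = 0, (f(x) − f(y))(x − y) ≥ 0 for all x,y ∈ ℝ, and |f(x)| ≤ C_f |x|(1 + x^{2p}) for all x ∈ ℝ for some constant C_f > 0 and positive integer p. Let T > 0, let w : [0,T] → ℓ²(ℤ,ℝ) be continuous, and let v : [0,T] → ℓ²(ℤ,ℝ) be a continuously differentiable solution of v′(t) = −νAv(t) − λv(t) − f̃(v(t) + w(t)) + g − νAw(t) − λw(t), where f̃ is the Nemytskii operator of f. Then there exists a constant C₀ > 0, depending only on ν, λ, C_f, p and the operator norm of A, such that for all t ∈ [0,T]: ‖v(t)‖² ≤ ‖v(0)‖² + C₀ ∫₀ᵗ ( ‖w(s)‖² + ‖w(s)‖^{4p+2} + ‖g‖² ) ds. -/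
/-!
Differentiating `‖v‖²` along the equation, the terms `νAv` and `f̃(v + w) - f̃(w)` only
dissipate energy: `⟪u, Au⟫ = 2‖u‖² - 2∑ uᵢuᵢ₊₁ ≥ 0` by Cauchy–Schwarz, and `f̃` is a
monotone operator because `f` is nondecreasing. What remains is `⟪v, -λv + h⟫` with
`h = g - f̃(w) - νAw - λw`, which is at most `‖h‖² / (4λ)`, and the growth bound on `f` controls
`‖h‖²` by `‖w‖² + ‖w‖^{4p+2} + ‖g‖²`. Integrating in time gives the estimate.
-/

noncomputable section

open Set intervalIntegral

/-- The real Hilbert space `ℓ²(ℤ, ℝ)` of square-summable sequences indexed by `ℤ`. -/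
abbrev l2Z : Type := lp (fun _ : ℤ => ℝ) 2

open scoped InnerProductSpace

theorem sq_add_growth_le (a c B M : ℝ) (p : ℕ) :
    (a + c * (1 + M ^ (2 * p)) * M + B * M) ^ 2 ≤
      (3 + 6 * c ^ 2 + 3 * B ^ 2) * (M ^ 2 + M ^ (4 * p + 2) + a ^ 2) := by
  have hpow : M ^ (4 * p + 2) = (M ^ (2 * p)) ^ 2 * M ^ 2 := by ring
  rw [hpow]
  set m := M ^ (2 * p)
  nlinarith [sq_nonneg (a - c * (1 + m) * M), sq_nonneg (a - B * M),
    sq_nonneg (c * (1 + m) * M - B * M), mul_nonneg (sq_nonneg (c * M)) (sq_nonneg (1 - m)),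
    mul_nonneg (sq_nonneg B) (add_nonneg (sq_nonneg (m * M)) (sq_nonneg a)),
    mul_nonneg (sq_nonneg c) (sq_nonneg a), sq_nonneg (m * M), sq_nonneg a, sq_nonneg M]

section EnergyInequality

variable {E : Type*} [NormedAddCommGroup E] [InnerProductSpace ℝ E]

theorem norm_sq_le_add_integral_of_two_inner_le {a b t : ℝ} {v v' : ℝ → E} {φ : ℝ → ℝ}
    (hv : ∀ s ∈ Icc a b, HasDerivWithinAt v (v' s) (Icc a b) s)
    (hv' : ContinuousOn v' (Icc a b)) (hφ : ContinuousOn φ (Icc a b))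
    (hle : ∀ s ∈ Icc a b, 2 * ⟪v s, v' s⟫_ℝ ≤ φ s) (ht : t ∈ Icc a b) :
    ‖v t‖ ^ 2 ≤ ‖v a‖ ^ 2 + ∫ s in a..t, φ s := by
  have hsub : Icc a t ⊆ Icc a b := Icc_subset_Icc_right ht.2
  have hv_cont : ContinuousOn v (Icc a b) := fun s hs => (hv s hs).continuousWithinAt
  have hderiv_int : IntervalIntegrable (fun s => 2 * ⟪v s, v' s⟫_ℝ) MeasureTheory.volume a t :=
    ((continuousOn_const.mul (hv_cont.inner hv')).mono hsub).intervalIntegrable_of_Icc ht.1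
  have hftc : ∫ s in a..t, 2 * ⟪v s, v' s⟫_ℝ = ‖v t‖ ^ 2 - ‖v a‖ ^ 2 := by
    refine integral_eq_sub_of_hasDeriv_right_of_le ht.1 ((hv_cont.norm.pow 2).mono hsub)
      (fun s hs => ?_) hderiv_int
    have hs_mem : Icc a b ∈ nhds s := Icc_mem_nhds hs.1 (hs.2.trans_le ht.2)
    exact ((hv s (hsub (Ioo_subset_Icc_self hs))).norm_sq.hasDerivAt hs_mem).hasDerivWithinAt
  have hmono : ∫ s in a..t, 2 * ⟪v s, v' s⟫_ℝ ≤ ∫ s in a..t, φ s :=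
    integral_mono_on ht.1 hderiv_int ((hφ.mono hsub).intervalIntegrable_of_Icc ht.1)
      fun s hs => hle s (hsub hs)
  linarith

theorem two_inner_neg_sub_smul_add_le {u d h : E} {lam : ℝ} (hd : 0 ≤ ⟪u, d⟫_ℝ)
    (hlam : 0 < lam) : 2 * ⟪u, -d - lam • u + h⟫_ℝ ≤ ‖h‖ ^ 2 / (2 * lam) := by
  rw [inner_add_right, inner_sub_right, inner_neg_right, real_inner_smul_right,
    real_inner_self_eq_norm_sq, le_div_iff₀ (by positivity)]
  nlinarith [sq_nonneg (2 * lam * ‖u‖ - ‖h‖), real_inner_le_norm u h]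

-- Bounds `‖h‖² / (2λ)` through `‖h‖ ≤ ‖g‖ + C_f (1 + ‖w‖^{2p}) ‖w‖ + (ν‖A‖ + λ) ‖w‖`.
def energyConstant (ν lam Cf a : ℝ) : ℝ := (3 + 6 * Cf ^ 2 + 3 * (ν * a + lam) ^ 2) / (2 * lam)

theorem two_inner_dissipative_rhs_le {A : E →L[ℝ] E} {F : E → E} {ν lam Cf : ℝ} {p : ℕ}
    (hν : 0 ≤ ν) (hlam : 0 < lam) (hA : ∀ u, 0 ≤ ⟪u, A u⟫_ℝ)
    (hF : ∀ x y, 0 ≤ ⟪x - y, F x - F y⟫_ℝ) {u w g : E}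
    (hFw : ‖F w‖ ≤ Cf * (1 + ‖w‖ ^ (2 * p)) * ‖w‖) :
    2 * ⟪u, -(ν • A u) - lam • u - F (u + w) + g - ν • A w - lam • w⟫_ℝ ≤
      energyConstant ν lam Cf ‖A‖ * (‖w‖ ^ 2 + ‖w‖ ^ (4 * p + 2) + ‖g‖ ^ 2) := by
  set h := g - F w - ν • A w - lam • w
  have hdiss : 0 ≤ ⟪u, ν • A u + (F (u + w) - F w)⟫_ℝ := by
    have hFuw := hF (u + w) w
    rw [add_sub_cancel_right] at hFuw
    rw [inner_add_right, real_inner_smul_right]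
    exact add_nonneg (mul_nonneg hν (hA u)) hFuw
  have hsplit : -(ν • A u) - lam • u - F (u + w) + g - ν • A w - lam • w =
      -(ν • A u + (F (u + w) - F w)) - lam • u + h := by
    simp only [h]; abel
  have hh : ‖h‖ ≤ ‖g‖ + Cf * (1 + ‖w‖ ^ (2 * p)) * ‖w‖ + (ν * ‖A‖ + lam) * ‖w‖ :=
    calc ‖h‖ ≤ ‖g‖ + ‖F w‖ + ‖ν • A w‖ + ‖lam • w‖ :=
          norm_sub_le_of_le (norm_sub_le_of_le (norm_sub_le _ _) le_rfl) le_rfl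
      _ ≤ ‖g‖ + Cf * (1 + ‖w‖ ^ (2 * p)) * ‖w‖ + ν * (‖A‖ * ‖w‖) + lam * ‖w‖ := by
          rw [norm_smul, norm_smul, Real.norm_of_nonneg hν, Real.norm_of_nonneg hlam.le]
          gcongr
          exact A.le_opNorm w
      _ = _ := by ring
  rw [hsplit, energyConstant, div_mul_eq_mul_div]
  refine (two_inner_neg_sub_smul_add_le hdiss hlam).trans ?_
  gcongr
  exact (pow_le_pow_left₀ (norm_nonneg h) hh 2).trans (sq_add_growth_le _ _ _ _ p)

end EnergyInequality

section SquareSummable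

variable {ι : Type*}

theorem lp.real_inner_eq_tsum (u v : lp (fun _ : ι => ℝ) 2) :
    ⟪u, v⟫_ℝ = ∑' i, u i * v i := by
  simp [lp.inner_eq_tsum, mul_comm]

theorem lp.norm_sq_eq_tsum (u : lp (fun _ : ι => ℝ) 2) : ‖u‖ ^ 2 = ∑' i, u i ^ 2 := by
  rw [← real_inner_self_eq_norm_sq, lp.inner_eq_tsum]
  simp [sq]

theorem lp.summable_sq (u : lp (fun _ : ι => ℝ) 2) : Summable fun i => u i ^ 2 := by
  simpa [sq, mul_comm] using lp.summable_inner (𝕜 := ℝ) u u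

variable [AddGroup ι]

theorem lp.tsum_sq_comp_add (u : lp (fun _ : ι => ℝ) 2) (k : ι) :
    ∑' i, u (i + k) ^ 2 = ‖u‖ ^ 2 := by
  rw [lp.norm_sq_eq_tsum]
  simpa using (Equiv.addRight k).tsum_eq fun i => u i ^ 2

theorem lp.summable_sq_comp_add (u : lp (fun _ : ι => ℝ) 2) (k : ι) :
    Summable fun i => u (i + k) ^ 2 := by
  simpa [Function.comp_def] using (Equiv.addRight k).summable_iff.2 (lp.summable_sq u)

theorem lp.summable_mul_comp_add (u : lp (fun _ : ι => ℝ) 2) (k : ι) :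
    Summable fun i => u i * u (i + k) :=
  (((lp.summable_sq u).add (lp.summable_sq_comp_add u k)).div_const 2).of_norm_bounded
    fun i => by
      rw [Real.norm_eq_abs, abs_mul]
      nlinarith [sq_nonneg (|u i| - |u (i + k)|), sq_abs (u i), sq_abs (u (i + k))]

theorem lp.tsum_mul_comp_add_le (u : lp (fun _ : ι => ℝ) 2) (k : ι) :
    ∑' i, u i * u (i + k) ≤ ‖u‖ ^ 2 :=
  calc ∑' i, u i * u (i + k) ≤ ∑' i, (u i ^ 2 + u (i + k) ^ 2) / 2 :=
        (lp.summable_mul_comp_add u k).tsum_le_tsum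
          (fun i => by nlinarith [sq_nonneg (u i - u (i + k))])
          (((lp.summable_sq u).add (lp.summable_sq_comp_add u k)).div_const 2)
    _ = ‖u‖ ^ 2 := by
        rw [tsum_div_const, (lp.summable_sq u).tsum_add (lp.summable_sq_comp_add u k),
          lp.tsum_sq_comp_add, ← lp.norm_sq_eq_tsum]
        ring

end SquareSummable

theorem inner_self_nonneg_of_discrete_laplacian {A : l2Z → l2Z}
    (hA : ∀ (u : l2Z) (i : ℤ), A u i = -u (i - 1) + 2 * u i - u (i + 1)) (u : l2Z) :
    0 ≤ ⟪u, A u⟫_ℝ := by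
  have hexpand : ⟪u, A u⟫_ℝ =
      2 * ‖u‖ ^ 2 - ∑' i, u i * u (i + -1) - ∑' i, u i * u (i + 1) := by
    rw [lp.real_inner_eq_tsum, lp.norm_sq_eq_tsum, ← tsum_mul_left,
      ← ((lp.summable_sq u).mul_left 2).tsum_sub (lp.summable_mul_comp_add u (-1)),
      ← (((lp.summable_sq u).mul_left 2).sub (lp.summable_mul_comp_add u (-1))).tsum_sub
        (lp.summable_mul_comp_add u 1)]
    refine tsum_congr fun i => ?_
    rw [hA, ← sub_eq_add_neg]
    ring
  linarith [lp.tsum_mul_comp_add_le u (-1), lp.tsum_mul_comp_add_le u 1]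

section Nemytskii

variable {ι : Type*} {f : ℝ → ℝ} {F : lp (fun _ : ι => ℝ) 2 → lp (fun _ : ι => ℝ) 2}

theorem inner_sub_nemytskii_sub_nonneg (hmono : ∀ x y : ℝ, 0 ≤ (f x - f y) * (x - y))
    (hF : ∀ u i, F u i = f (u i)) (x y : lp (fun _ : ι => ℝ) 2) :
    0 ≤ ⟪x - y, F x - F y⟫_ℝ := by
  rw [lp.real_inner_eq_tsum]
  refine tsum_nonneg fun i => ?_
  simpa [hF, mul_comm] using hmono (x i) (y i)

theorem norm_nemytskii_le {C : ℝ} {p : ℕ} (hC : 0 ≤ C)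
    (hgrowth : ∀ x : ℝ, |f x| ≤ C * |x| * (1 + x ^ (2 * p)))
    (hF : ∀ u i, F u i = f (u i)) (w : lp (fun _ : ι => ℝ) 2) :
    ‖F w‖ ≤ C * (1 + ‖w‖ ^ (2 * p)) * ‖w‖ := by
  have hK : 0 ≤ C * (1 + ‖w‖ ^ (2 * p)) := by positivity
  calc ‖F w‖ ≤ ‖(C * (1 + ‖w‖ ^ (2 * p))) • w‖ := by
        refine lp.norm_mono two_ne_zero fun i => ?_
        have hwi : w i ^ (2 * p) ≤ ‖w‖ ^ (2 * p) := by
          rw [← (even_two_mul p).pow_abs]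
          exact pow_le_pow_left₀ (abs_nonneg _) (lp.norm_apply_le_norm two_ne_zero w i) _
        rw [hF, lp.coeFn_smul, Pi.smul_apply, norm_smul, Real.norm_of_nonneg hK,
          Real.norm_eq_abs, Real.norm_eq_abs]
        calc |f (w i)| ≤ C * |w i| * (1 + w i ^ (2 * p)) := hgrowth (w i)
          _ ≤ C * |w i| * (1 + ‖w‖ ^ (2 * p)) := by gcongr
          _ = C * (1 + ‖w‖ ^ (2 * p)) * |w i| := by ring
    _ = C * (1 + ‖w‖ ^ (2 * p)) * ‖w‖ := by rw [norm_smul, Real.norm_of_nonneg hK]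

end Nemytskii

theorem lattice_apriori_estimate_general
    (ν lam : ℝ) (hν : 0 < ν) (hlam : 0 < lam)
    (A : l2Z →L[ℝ] l2Z)
    (hA : ∀ (u : l2Z) (i : ℤ), A u i = -u (i - 1) + 2 * u i - u (i + 1))
    (g : l2Z)
    (f : ℝ → ℝ)
    (hmono : ∀ x y : ℝ, 0 ≤ (f x - f y) * (x - y))
    (Cf : ℝ) (hCf : 0 < Cf) (p : ℕ)
    (hgrowth : ∀ x : ℝ, |f x| ≤ Cf * |x| * (1 + x ^ (2 * p)))
    (F : l2Z → l2Z) (hF : ∀ (u : l2Z) (i : ℤ), F u i = f (u i)) :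
    ∃ C₀ > (0 : ℝ), ∀ T : ℝ, 0 < T →
      ∀ w : ℝ → l2Z, ContinuousOn w (Icc 0 T) →
      ∀ v v' : ℝ → l2Z, ContinuousOn v' (Icc 0 T) →
        (∀ t ∈ Icc (0 : ℝ) T, HasDerivWithinAt v (v' t) (Icc 0 T) t) →
        (∀ t ∈ Icc (0 : ℝ) T,
          v' t = -(ν • A (v t)) - lam • v t - F (v t + w t) + g
            - ν • A (w t) - lam • w t) →
        ∀ t ∈ Icc (0 : ℝ) T,
          ‖v t‖ ^ 2 ≤ ‖v 0‖ ^ 2 +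
            C₀ * ∫ s in (0 : ℝ)..t,
              (‖w s‖ ^ 2 + ‖w s‖ ^ (4 * p + 2) + ‖g‖ ^ 2) := by
  refine ⟨energyConstant ν lam Cf ‖A‖, by unfold energyConstant; positivity, ?_⟩
  intro T _ w hw v v' hv' hv hv_eq t ht
  have hpointwise : ∀ s ∈ Icc (0 : ℝ) T, 2 * ⟪v s, v' s⟫_ℝ ≤
      energyConstant ν lam Cf ‖A‖ * (‖w s‖ ^ 2 + ‖w s‖ ^ (4 * p + 2) + ‖g‖ ^ 2) :=
    fun s hs => hv_eq s hs ▸ two_inner_dissipative_rhs_le hν.le hlam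
      (inner_self_nonneg_of_discrete_laplacian hA)
      (inner_sub_nemytskii_sub_nonneg hmono hF)
      (norm_nemytskii_le hCf.le hgrowth hF (w s))
  rw [← intervalIntegral.integral_const_mul]
  exact norm_sq_le_add_integral_of_two_inner_le hv hv'
    (continuousOn_const.mul (((hw.norm.pow 2).add (hw.norm.pow _)).add continuousOn_const))
    hpointwise ht

/-- **a priori estimate.** For the lattice system
`v′(t) = −νAv − λv − f̃(v + w) + g − νAw − λw` with `f` monotone, `f(0)=0` and of
polynomial growth, there is a constant `C₀ > 0` depending only on
`ν, λ, C_f, p, A` such that every continuously differentiable solution `v` on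
`[0,T]` satisfies
`‖v(t)‖² ≤ ‖v(0)‖² + C₀ ∫₀ᵗ (‖w‖² + ‖w‖^{4p+2} + ‖g‖²)`. -/
theorem lattice_apriori_estimate
    (ν lam : ℝ) (hν : 0 < ν) (hlam : 0 < lam)
    (A : l2Z →L[ℝ] l2Z)
    (hA : ∀ (u : l2Z) (i : ℤ), A u i = -u (i - 1) + 2 * u i - u (i + 1))
    (g : l2Z)
    (f : ℝ → ℝ) (hf : ContDiff ℝ 1 f) (hf0 : f 0 = 0)
    (hmono : ∀ x y : ℝ, 0 ≤ (f x - f y) * (x - y))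
    (Cf : ℝ) (hCf : 0 < Cf) (p : ℕ) (hp : 1 ≤ p)
    (hgrowth : ∀ x : ℝ, |f x| ≤ Cf * |x| * (1 + x ^ (2 * p)))
    (F : l2Z → l2Z) (hF : ∀ (u : l2Z) (i : ℤ), F u i = f (u i)) :
    ∃ C₀ > (0 : ℝ), ∀ T : ℝ, 0 < T →
      ∀ w : ℝ → l2Z, ContinuousOn w (Icc 0 T) →
      ∀ v v' : ℝ → l2Z, ContinuousOn v' (Icc 0 T) →
        (∀ t ∈ Icc (0 : ℝ) T, HasDerivWithinAt v (v' t) (Icc 0 T) t) →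
        (∀ t ∈ Icc (0 : ℝ) T,
          v' t = -(ν • A (v t)) - lam • v t - F (v t + w t) + g
            - ν • A (w t) - lam • w t) →
        ∀ t ∈ Icc (0 : ℝ) T,
          ‖v t‖ ^ 2 ≤ ‖v 0‖ ^ 2 +
            C₀ * ∫ s in (0 : ℝ)..t,
              (‖w s‖ ^ 2 + ‖w s‖ ^ (4 * p + 2) + ‖g‖ ^ 2) :=
  lattice_apriori_estimate_general ν lam hν hlam A hA g f hmono Cf hCf p hgrowth F hF

end
end

section
/- Let ν, λ > 0, let A be the operator on ℓ²(ℤ,ℝ) given by (Au)_i = −u_{i−1} + 2u_i − u_{i+1}, let g ∈ ℓ²(ℤ,ℝ), and let f : ℝ → ℝ be continuously differentiable with f(0) = 0, (f(x) − f(y))(x − y) ≥ 0 for all x,y ∈ ℝ, and |f(x)| ≤ C_f |x|(1 + x^{2p}) for all x ∈ ℝ for some constant C_f > 0 and positive integer p. Let T > 0, let w : [0,T] → ℓ²(ℤ,ℝ) be continuous with w(0) = 0, and let v₀ ∈ ℓ²(ℤ,ℝ). Then there exists a unique continuous function v : [0,T] → ℓ²(ℤ,ℝ) such that for all t ∈ [0,T]: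 v(t) = v₀ + ∫₀ᵗ ( −νAv(s) − λv(s) − f̃(v(s) + w(s)) + g − νAw(s) − λw(s) ) ds, where f̃ is the Nemytskii operator of f. -/
/-!
Truncating the vector field radially at a radius `r` makes it globally Lipschitz, so the
Picard–Lindelöf theorem yields a solution on the whole interval `[0, T]`. Monotonicity of `f`
gives `⟪f̃ (u + w) - f̃ w, u⟫ ≥ 0`, hence `d/dt ‖v‖² ≤ C (1 + ‖v‖²)` with `C` independent of `r`;
this one-sided bound survives the truncation, and Grönwall's inequality keeps the solution inside
the ball where the truncation is inactive once `r` is large. Uniqueness holds because the field is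
Lipschitz on bounded sets and continuous solutions are bounded.
-/

noncomputable section

open Set intervalIntegral

open Function Metric
open scoped NNReal ENNReal RealInnerProductSpace

section BallRetraction

variable {E : Type*} [NormedAddCommGroup E] [NormedSpace ℝ E]

def ballRetraction (r : ℝ) (x : E) : E := min 1 (r / ‖x‖) • x

lemma min_one_div_mul_self {r n : ℝ} (hr : 0 ≤ r) (hn : 0 ≤ n) : min 1 (r / n) * n = min n r := by
  rcases hn.eq_or_lt with rfl | hn
  · simp [hr]
  · rw [min_mul_of_nonneg _ _ hn.le, one_mul, div_mul_cancel₀ _ hn.ne']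

lemma norm_ballRetraction {r : ℝ} (hr : 0 ≤ r) (x : E) : ‖ballRetraction r x‖ = min ‖x‖ r := by
  rw [ballRetraction, norm_smul, Real.norm_of_nonneg (by positivity),
    min_one_div_mul_self hr (norm_nonneg x)]

lemma ballRetraction_mem_closedBall {r : ℝ} (hr : 0 ≤ r) (x : E) :
    ballRetraction r x ∈ closedBall 0 r := by
  rw [mem_closedBall_zero_iff, norm_ballRetraction hr]
  exact min_le_right _ _

lemma ballRetraction_of_norm_le {r : ℝ} {x : E} (h : ‖x‖ ≤ r) : ballRetraction r x = x := by
  rcases eq_or_ne x 0 with rfl | hx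
  · simp [ballRetraction]
  · rw [ballRetraction, min_eq_left ((one_le_div (norm_pos_iff.2 hx)).2 h), one_smul]

lemma ballRetraction_of_lt_norm {r : ℝ} (hr : 0 ≤ r) {x : E} (h : r < ‖x‖) :
    ballRetraction r x = (r / ‖x‖) • x := by
  rw [ballRetraction, min_eq_right ((div_le_one (hr.trans_lt h)).2 h.le)]

lemma norm_ballRetraction_sub_le_of_norm_le {r : ℝ} (hr : 0 ≤ r) {x y : E} (hxy : ‖y‖ ≤ ‖x‖) :
    ‖ballRetraction r x - ballRetraction r y‖ ≤ 2 * ‖x - y‖ := by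
  rcases eq_or_ne y 0 with rfl | hy
  · have : ‖ballRetraction r x‖ ≤ ‖x‖ := (norm_ballRetraction hr x).trans_le (min_le_left _ _)
    simpa [ballRetraction] using this.trans (by linarith [norm_nonneg x])
  set a := min 1 (r / ‖x‖)
  set b := min 1 (r / ‖y‖)
  have ha : 0 ≤ a := by positivity
  have ha1 : a ≤ 1 := min_le_left _ _
  have hab : a ≤ b := min_le_min le_rfl (div_le_div_of_nonneg_left hr (norm_pos_iff.2 hy) hxy)
  -- `(b - a) ‖y‖ = min ‖y‖ r - a ‖y‖ ≤ min ‖x‖ r - a ‖y‖ = a (‖x‖ - ‖y‖)`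
  have hshrink : (b - a) * ‖y‖ ≤ a * ‖x - y‖ := by
    have hx := min_one_div_mul_self hr (norm_nonneg x)
    have hy := min_one_div_mul_self hr (norm_nonneg y)
    have := min_le_min_right r hxy
    nlinarith [norm_sub_norm_le x y]
  calc ‖ballRetraction r x - ballRetraction r y‖ = ‖a • (x - y) - (b - a) • y‖ := by
        change ‖a • x - b • y‖ = _
        rw [smul_sub, sub_smul]; congr 1; abel
    _ ≤ a * ‖x - y‖ + (b - a) * ‖y‖ := by
        refine (norm_sub_le _ _).trans_eq ?_
        rw [norm_smul, norm_smul, Real.norm_of_nonneg ha, Real.norm_of_nonneg (sub_nonneg.2 hab)]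
    _ ≤ 2 * ‖x - y‖ := by nlinarith [norm_nonneg (x - y)]

lemma lipschitzWith_ballRetraction {r : ℝ} (hr : 0 ≤ r) :
    LipschitzWith 2 (ballRetraction (E := E) r) := by
  refine LipschitzWith.of_dist_le_mul fun x y => ?_
  simp only [dist_eq_norm, NNReal.coe_ofNat]
  rcases le_total ‖y‖ ‖x‖ with h | h
  · exact norm_ballRetraction_sub_le_of_norm_le hr h
  · rw [norm_sub_rev, norm_sub_rev x]
    exact norm_ballRetraction_sub_le_of_norm_le hr h

end BallRetraction

section InnerProduct

variable {E : Type*} [NormedAddCommGroup E] [InnerProductSpace ℝ E]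

lemma inner_apply_ballRetraction_le {Φ : E → E} {K r : ℝ} (hK : 0 ≤ K) (hr : 1 ≤ r)
    (hΦ : ∀ x, ⟪Φ x, x⟫ ≤ K * (1 + ‖x‖ ^ 2)) (x : E) :
    ⟪Φ (ballRetraction r x), x⟫ ≤ 2 * K * (1 + ‖x‖ ^ 2) := by
  rcases le_or_gt ‖x‖ r with h | h
  · rw [ballRetraction_of_norm_le h]
    nlinarith [hΦ x, sq_nonneg ‖x‖]
  -- outside the ball, `⟪Φ (c • x), x⟫ = c⁻¹ ⟪Φ (c • x), c • x⟫` with `c = r / ‖x‖`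
  have hn : 0 < ‖x‖ := by linarith
  have hc : 0 < r / ‖x‖ := by positivity
  have hΦr := hΦ ((r / ‖x‖) • x)
  rw [real_inner_smul_right, norm_smul, Real.norm_of_nonneg hc.le, div_mul_cancel₀ _ hn.ne'] at hΦr
  rw [ballRetraction_of_lt_norm (by linarith) h]
  refine le_of_mul_le_mul_left (hΦr.trans ?_) hc
  rw [div_mul_eq_mul_div, le_div_iff₀ hn]
  have : ‖x‖ * (1 + r ^ 2) ≤ 2 * r * (1 + ‖x‖ ^ 2) := by
    have h₁ : r * ‖x‖ * r ≤ r * ‖x‖ * ‖x‖ := by gcongr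
    have h₂ : ‖x‖ * 1 ≤ ‖x‖ * (r * ‖x‖) := by gcongr; nlinarith
    nlinarith
  nlinarith [mul_le_mul_of_nonneg_left this hK]

lemma norm_sq_add_one_le_of_inner_deriv_le {v v' : ℝ → E} {K a b : ℝ}
    (hv : ContinuousOn v (Icc a b)) (hv' : ∀ t ∈ Ico a b, HasDerivWithinAt v (v' t) (Ici t) t)
    (hK : ∀ t ∈ Ico a b, ⟪v' t, v t⟫ ≤ K * (1 + ‖v t‖ ^ 2)) :
    ∀ t ∈ Icc a b, ‖v t‖ ^ 2 + 1 ≤ (‖v a‖ ^ 2 + 1) * Real.exp (2 * K * (t - a)) := by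
  have := le_gronwallBound_of_liminf_deriv_right_le (f := fun t => ‖v t‖ ^ 2 + 1)
    (f' := fun t => 2 * ⟪v t, v' t⟫) (K := 2 * K) (ε := 0)
    ((hv.norm.pow 2).add continuousOn_const)
    (fun t ht r hr => by
      simpa [slope_def_module] using ((hv' t ht).norm_sq.add_const 1).liminf_right_slope_le hr)
    le_rfl (fun t ht => by rw [real_inner_comm]; linarith [hK t ht])
  simpa only [gronwallBound_ε0] using this

end InnerProduct

section IntegralEquation

variable {E : Type*} [NormedAddCommGroup E] [NormedSpace ℝ E] [CompleteSpace E]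
  {V : ℝ → E → E} {T : ℝ} {x₀ : E}

def IsIntegralSolution (V : ℝ → E → E) (T : ℝ) (x₀ : E) (v : ℝ → E) : Prop :=
  ContinuousOn v (Icc 0 T) ∧ ∀ t ∈ Icc (0 : ℝ) T, v t = x₀ + ∫ s in (0 : ℝ)..t, V s (v s)

lemma IsIntegralSolution.hasDerivWithinAt {v : ℝ → E}
    (hV : ContinuousOn (uncurry V) (Icc 0 T ×ˢ univ)) (hv : IsIntegralSolution V T x₀ v)
    {t : ℝ} (ht : t ∈ Icc 0 T) : HasDerivWithinAt v (V t (v t)) (Icc 0 T) t :=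
  (ODE.hasDerivWithinAt_picard_Icc ⟨le_rfl, ht.1.trans ht.2⟩ hV hv.1 (fun _ _ => trivial) x₀
    ht).congr hv.2 (hv.2 t ht)

lemma isIntegralSolution_of_hasDerivWithinAt {v : ℝ → E}
    (hV : ContinuousOn (uncurry V) (Icc 0 T ×ˢ univ))
    (hv : ∀ t ∈ Icc 0 T, HasDerivWithinAt v (V t (v t)) (Icc 0 T) t) (hv₀ : v 0 = x₀) :
    IsIntegralSolution V T x₀ v := by
  refine ⟨fun t ht => (hv t ht).continuousWithinAt, fun t ht => ?_⟩
  have hsub : uIcc 0 t ⊆ Icc 0 T := by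
    rw [uIcc_of_le ht.1]; exact Icc_subset_Icc_right ht.2
  rw [← hv₀, ← ODE.picard_eq_of_hasDerivAt (hV.mono (prod_mono hsub subset_rfl))
    (fun s hs => (hv s (hsub hs)).mono hsub) (mapsTo_univ _ _)]
  rfl

theorem IsIntegralSolution.eqOn {v₁ v₂ : ℝ → E} (hV : ContinuousOn (uncurry V) (Icc 0 T ×ˢ univ))
    (hlip : ∀ R, ∃ L, ∀ t ∈ Icc 0 T, LipschitzOnWith L (V t) (closedBall 0 R))
    (hv₁ : IsIntegralSolution V T x₀ v₁) (hv₂ : IsIntegralSolution V T x₀ v₂) :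
    EqOn v₁ v₂ (Icc 0 T) := by
  intro t ht
  have hT : 0 ≤ T := ht.1.trans ht.2
  obtain ⟨R₁, hR₁⟩ := isCompact_Icc.exists_bound_of_continuousOn hv₁.1
  obtain ⟨R₂, hR₂⟩ := isCompact_Icc.exists_bound_of_continuousOn hv₂.1
  obtain ⟨L, hL⟩ := hlip (max R₁ R₂)
  have hderiv : ∀ {v}, IsIntegralSolution V T x₀ v →
      ∀ s ∈ Ico 0 T, HasDerivWithinAt v (V s (v s)) (Ici s) s := fun hv s hs =>
    (hv.hasDerivWithinAt hV (Ico_subset_Icc_self hs)).mono_of_mem_nhdsWithin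
      (Icc_mem_nhdsGE_of_mem hs)
  refine ODE_solution_unique_of_mem_Icc_right (s := fun _ => closedBall 0 (max R₁ R₂))
    (fun s hs => hL s (Ico_subset_Icc_self hs)) hv₁.1 (hderiv hv₁)
    (fun s hs => mem_closedBall_zero_iff.2
      ((hR₁ s (Ico_subset_Icc_self hs)).trans (le_max_left _ _)))
    hv₂.1 (hderiv hv₂)
    (fun s hs => mem_closedBall_zero_iff.2
      ((hR₂ s (Ico_subset_Icc_self hs)).trans (le_max_right _ _)))
    ?_ ht
  rw [hv₁.2 0 ⟨le_rfl, hT⟩, hv₂.2 0 ⟨le_rfl, hT⟩, integral_same, integral_same]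

end IntegralEquation

lemma exists_norm_le_of_lipschitzOnWith {E : Type*} [NormedAddCommGroup E] {V : ℝ → E → E}
    {s : Set ℝ} (hs : IsCompact s) (hV : ContinuousOn (V · 0) s) {L : ℝ≥0} {R : ℝ}
    (hL : ∀ t ∈ s, LipschitzOnWith L (V t) (closedBall 0 R)) :
    ∃ C : ℝ≥0, ∀ t ∈ s, ∀ x ∈ closedBall 0 R, ‖V t x‖ ≤ C := by
  obtain ⟨C₀, hC₀⟩ := hs.exists_bound_of_continuousOn hV
  refine ⟨(C₀ + L * R).toNNReal, fun t ht x hx => ?_⟩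
  have h0 : (0 : E) ∈ closedBall 0 R := mem_closedBall_self (dist_nonneg.trans hx)
  calc ‖V t x‖ ≤ ‖V t 0‖ + L * dist x 0 := by
        have := (hL t ht).dist_le_mul x hx 0 h0
        rw [dist_eq_norm] at this
        linarith [norm_sub_norm_le (V t x) (V t 0)]
    _ ≤ C₀ + L * R := add_le_add (hC₀ t ht) (by gcongr; exact hx)
    _ ≤ _ := Real.le_coe_toNNReal _

section Existence

variable {E : Type*} [NormedAddCommGroup E] [InnerProductSpace ℝ E] [CompleteSpace E]
  {V : ℝ → E → E} {T : ℝ}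

theorem exists_isIntegralSolution (hT : 0 ≤ T) (x₀ : E)
    (hV : ContinuousOn (uncurry V) (Icc 0 T ×ˢ univ))
    (hlip : ∀ R, ∃ L, ∀ t ∈ Icc 0 T, LipschitzOnWith L (V t) (closedBall 0 R)) {K : ℝ}
    (hgrowth : ∀ t ∈ Icc 0 T, ∀ x, ⟪V t x, x⟫ ≤ K * (1 + ‖x‖ ^ 2)) :
    ∃ v, IsIntegralSolution V T x₀ v := by
  have hK : 0 ≤ K := by simpa using hgrowth 0 ⟨le_rfl, hT⟩ 0
  -- The field truncated at radius `r` has growth constant `2 K`, so by the energy estimate its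
  -- solution stays in `closedBall 0 r`, where the truncation does nothing.
  set r := √((‖x₀‖ ^ 2 + 1) * Real.exp (4 * K * T))
  have hr : 1 ≤ r := Real.one_le_sqrt.2 (one_le_mul_of_one_le_of_one_le (by nlinarith)
    (Real.one_le_exp (by positivity)))
  have hVt : ∀ x, ContinuousOn (V · x) (Icc 0 T) := fun x =>
    hV.comp (continuousOn_id.prodMk continuousOn_const) fun t ht => ⟨ht, trivial⟩
  obtain ⟨L, hL⟩ := hlip r
  obtain ⟨C, hC⟩ := exists_norm_le_of_lipschitzOnWith isCompact_Icc (hVt 0) hL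
  set G : ℝ → E → E := fun t x => V t (ballRetraction r x)
  have hG : IsPicardLindelof G (tmin := 0) (tmax := T) ⟨0, le_rfl, hT⟩ x₀ (C * T.toNNReal) 0 C
      (L * 2) :=
    { lipschitzOnWith := fun t ht =>
        (hL t ht).comp (lipschitzWith_ballRetraction (by linarith)).lipschitzOnWith
          fun x _ => ballRetraction_mem_closedBall (by linarith) x
      continuousOn := fun x _ => hVt _
      norm_le := fun t ht x _ => hC t ht _ (ballRetraction_mem_closedBall (by linarith) x)
      mul_max_le := by simp [hT] }
  obtain ⟨v, hv₀ : v 0 = x₀, hv⟩ := hG.exists_eq_forall_mem_Icc_hasDerivWithinAt₀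
  have hvr : ∀ t ∈ Icc 0 T, ‖v t‖ ≤ r := by
    have := norm_sq_add_one_le_of_inner_deriv_le (K := 2 * K)
      (fun t ht => (hv t ht).continuousWithinAt)
      (fun t ht => (hv t (Ico_subset_Icc_self ht)).mono_of_mem_nhdsWithin
        (Icc_mem_nhdsGE_of_mem ht))
      (fun t ht => inner_apply_ballRetraction_le hK hr (hgrowth t (Ico_subset_Icc_self ht)) _)
    intro t ht
    refine (Real.le_sqrt (norm_nonneg _) (by positivity)).2 ?_
    have hexp : Real.exp (2 * (2 * K) * (t - 0)) ≤ Real.exp (4 * K * T) :=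
      Real.exp_le_exp.2 (by nlinarith [ht.2])
    rw [hv₀] at this
    nlinarith [this t ht, mul_le_mul_of_nonneg_left hexp (by positivity : 0 ≤ ‖x₀‖ ^ 2 + 1)]
  refine ⟨v, isIntegralSolution_of_hasDerivWithinAt hV (fun t ht => ?_) hv₀⟩
  simpa [G, ballRetraction_of_norm_le (hvr t ht)] using hv t ht

theorem existsUnique_isIntegralSolution (hT : 0 ≤ T) (x₀ : E)
    (hV : ContinuousOn (uncurry V) (Icc 0 T ×ˢ univ))
    (hlip : ∀ R, ∃ L, ∀ t ∈ Icc 0 T, LipschitzOnWith L (V t) (closedBall 0 R)) {K : ℝ}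
    (hgrowth : ∀ t ∈ Icc 0 T, ∀ x, ⟪V t x, x⟫ ≤ K * (1 + ‖x‖ ^ 2)) :
    ∃ v, IsIntegralSolution V T x₀ v ∧
      ∀ v₂, IsIntegralSolution V T x₀ v₂ → EqOn v₂ v (Icc 0 T) :=
  let ⟨v, hv⟩ := exists_isIntegralSolution hT x₀ hV hlip hgrowth
  ⟨v, hv, fun _ hv₂ => hv₂.eqOn hV hlip hv⟩

end Existence

section Semilinear

variable {E : Type*} [NormedAddCommGroup E] [InnerProductSpace ℝ E]

def semilinearField (L : E →L[ℝ] E) (F : E → E) (w h : ℝ → E) (t : ℝ) (u : E) : E :=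
  L u - F (u + w t) + h t

variable {L : E →L[ℝ] E} {F : E → E} {w h : ℝ → E} {s : Set ℝ}

lemma continuousOn_uncurry_semilinearField (hF : Continuous F) (hw : ContinuousOn w s)
    (hh : ContinuousOn h s) : ContinuousOn (uncurry (semilinearField L F w h)) (s ×ˢ univ) :=
  ((L.continuous.comp continuous_snd).continuousOn.sub
    (hF.comp_continuousOn (continuous_snd.continuousOn.add (hw.comp continuousOn_fst
      fun _ hx => hx.1)))).add (hh.comp continuousOn_fst fun _ hx => hx.1)

lemma lipschitzOnWith_semilinearField {W R : ℝ} {K : ℝ≥0} (hw : ∀ t ∈ s, ‖w t‖ ≤ W)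
    (hF : LipschitzOnWith K F (closedBall 0 (R + W))) {t : ℝ} (ht : t ∈ s) :
    LipschitzOnWith (‖L‖₊ + K) (semilinearField L F w h t) (closedBall 0 R) := by
  have hshift := hF.comp (isometry_add_right (w t)).lipschitz.lipschitzOnWith fun u hu =>
    mem_closedBall_zero_iff.2 ((norm_add_le _ _).trans
      (add_le_add (mem_closedBall_zero_iff.1 hu) (hw t ht)))
  rw [mul_one] at hshift
  have := (L.lipschitz.lipschitzOnWith.sub hshift).add (LipschitzWith.const (h t)).lipschitzOnWith
  rwa [add_zero] at this

lemma inner_semilinearField_le (hF : ∀ x y, 0 ≤ ⟪F x - F y, x - y⟫) (t : ℝ) (u : E) :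
    ⟪semilinearField L F w h t u, u⟫ ≤ ‖L‖ * ‖u‖ ^ 2 + ‖h t - F (w t)‖ * ‖u‖ := by
  have hmono : 0 ≤ ⟪F (u + w t) - F (w t), u⟫ := by simpa using hF (u + w t) (w t)
  have hsplit : semilinearField L F w h t u = L u - (F (u + w t) - F (w t)) + (h t - F (w t)) := by
    rw [semilinearField]; abel
  rw [hsplit, inner_add_left, inner_sub_left]
  have hL : ⟪L u, u⟫ ≤ ‖L‖ * ‖u‖ ^ 2 := by
    nlinarith [real_inner_le_norm (L u) u, L.le_opNorm u, norm_nonneg u]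
  nlinarith [real_inner_le_norm (h t - F (w t)) u]

theorem existsUnique_isIntegralSolution_semilinearField [CompleteSpace E] {T : ℝ} (hT : 0 ≤ T)
    (x₀ : E) (hFlip : ∀ R, ∃ K, LipschitzOnWith K F (closedBall 0 R))
    (hFmono : ∀ x y, 0 ≤ ⟪F x - F y, x - y⟫)
    (hw : ContinuousOn w (Icc 0 T)) (hh : ContinuousOn h (Icc 0 T)) :
    ∃ v, IsIntegralSolution (semilinearField L F w h) T x₀ v ∧
      ∀ v₂, IsIntegralSolution (semilinearField L F w h) T x₀ v₂ → EqOn v₂ v (Icc 0 T) := by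
  have hFc : Continuous F := continuous_iff_continuousAt.2 fun x => by
    obtain ⟨K, hK⟩ := hFlip (‖x‖ + 1)
    exact hK.continuousOn.continuousAt (closedBall_mem_nhds_of_mem (by simp))
  obtain ⟨W, hW⟩ := isCompact_Icc.exists_bound_of_continuousOn hw
  obtain ⟨H, hH⟩ := isCompact_Icc.exists_bound_of_continuousOn (hh.sub (hFc.comp_continuousOn hw))
  refine existsUnique_isIntegralSolution hT x₀ (continuousOn_uncurry_semilinearField hFc hw hh)
    (fun R => ?_) (K := ‖L‖ + H) (fun t ht u => ?_)
  · obtain ⟨K, hK⟩ := hFlip (R + W)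
    exact ⟨_, fun t ht => lipschitzOnWith_semilinearField hW hK ht⟩
  · have hHt : ‖h t - F (w t)‖ ≤ H := hH t ht
    have hu : ‖u‖ ≤ 1 + ‖u‖ ^ 2 := by nlinarith [sq_nonneg (‖u‖ - 1)]
    nlinarith [inner_semilinearField_le (L := L) (w := w) (h := h) hFmono t u, norm_nonneg L,
      norm_nonneg u, norm_nonneg (h t - F (w t)), mul_le_mul_of_nonneg_right hHt (norm_nonneg u)]

end Semilinear

section Nemytskii

variable {ι : Type*} {f : ℝ → ℝ}

lemma lipschitzOnWith_nemytskii {p : ℝ≥0∞} [Fact (1 ≤ p)]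
    {F : lp (fun _ : ι => ℝ) p → lp (fun _ : ι => ℝ) p} (hF : ∀ u i, F u i = f (u i))
    {K : ℝ≥0} {R : ℝ} (hf : LipschitzOnWith K f (closedBall 0 R)) :
    LipschitzOnWith K F (closedBall 0 R) := by
  have hp : p ≠ 0 := (zero_lt_one.trans_le Fact.out).ne'
  have hcoord : ∀ x ∈ closedBall (0 : lp (fun _ : ι => ℝ) p) R, ∀ i, x i ∈ closedBall 0 R :=
    fun x hx i => mem_closedBall_zero_iff.2
      ((lp.norm_apply_le_norm hp x i).trans (mem_closedBall_zero_iff.1 hx))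
  refine LipschitzOnWith.of_dist_le_mul fun x hx y hy => ?_
  rw [dist_eq_norm, dist_eq_norm, ← norm_smul_of_nonneg K.coe_nonneg]
  refine lp.norm_mono hp fun i => ?_
  rw [lp.coeFn_smul, lp.coeFn_sub, lp.coeFn_sub, Pi.smul_apply, Pi.sub_apply, Pi.sub_apply, hF, hF]
  simpa [Real.dist_eq, abs_mul] using hf.dist_le_mul _ (hcoord x hx i) _ (hcoord y hy i)

lemma inner_nemytskii_sub_nonneg {F : lp (fun _ : ι => ℝ) 2 → lp (fun _ : ι => ℝ) 2}
    (hF : ∀ u i, F u i = f (u i)) (hf : ∀ x y, 0 ≤ (f x - f y) * (x - y)) (x y) :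
    0 ≤ ⟪F x - F y, x - y⟫ := by
  rw [lp.inner_eq_tsum]
  exact tsum_nonneg fun i => by simpa [hF, mul_comm] using hf (x i) (y i)

end Nemytskii

theorem lattice_existence_uniqueness_general
    (ν lam : ℝ)
    (A : l2Z →L[ℝ] l2Z)
    (g : l2Z)
    (f : ℝ → ℝ) (hf : ContDiff ℝ 1 f)
    (hmono : ∀ x y : ℝ, 0 ≤ (f x - f y) * (x - y))
    (F : l2Z → l2Z) (hF : ∀ (u : l2Z) (i : ℤ), F u i = f (u i))
    (T : ℝ) (hT : 0 < T)
    (w : ℝ → l2Z) (hw : ContinuousOn w (Icc 0 T))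
    (v₀ : l2Z) :
    ∃ v : ℝ → l2Z,
      (ContinuousOn v (Icc 0 T) ∧
        ∀ t ∈ Icc (0 : ℝ) T,
          v t = v₀ + ∫ s in (0 : ℝ)..t,
            (-(ν • A (v s)) - lam • v s - F (v s + w s) + g
              - ν • A (w s) - lam • w s)) ∧
      ∀ v₂ : ℝ → l2Z,
        (ContinuousOn v₂ (Icc 0 T) ∧
          ∀ t ∈ Icc (0 : ℝ) T,
            v₂ t = v₀ + ∫ s in (0 : ℝ)..t,
              (-(ν • A (v₂ s)) - lam • v₂ s - F (v₂ s + w s) + g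
                - ν • A (w s) - lam • w s)) →
        EqOn v₂ v (Icc 0 T) := by
  have hFlip (R : ℝ) : ∃ K, LipschitzOnWith K F (closedBall 0 R) :=
    let ⟨K, hK⟩ := hf.contDiffOn.exists_lipschitzOnWith one_ne_zero (convex_closedBall 0 R)
      (isCompact_closedBall 0 R)
    ⟨K, lipschitzOnWith_nemytskii hF hK⟩
  have hV : (fun s u => -(ν • A u) - lam • u - F (u + w s) + g - ν • A (w s) - lam • w s) =
      semilinearField (-(ν • A) - lam • 1) F w (fun s => g - ν • A (w s) - lam • w s) := by
    ext s u : 2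
    simp only [semilinearField, sub_apply, neg_apply, smul_apply, one_apply_eq_self]
    abel
  have hh : ContinuousOn (fun s => g - ν • A (w s) - lam • w s) (Icc 0 T) := by fun_prop
  obtain ⟨v, hv, huniq⟩ := existsUnique_isIntegralSolution_semilinearField hT.le v₀ hFlip
    (inner_nemytskii_sub_nonneg hF hmono) hw hh
  rw [← hV] at hv huniq
  exact ⟨v, hv, huniq⟩

/-- **existence and uniqueness.** For the lattice integral
equation
`v(t) = v₀ + ∫₀ᵗ (−νAv − λv − f̃(v + w) + g − νAw − λw) ds`
with `f` monotone, `f(0) = 0` and of polynomial growth, `w` continuous with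
`w(0) = 0`, there is a unique continuous solution `v : [0,T] → ℓ²(ℤ,ℝ)`. -/
theorem lattice_existence_uniqueness
    (ν lam : ℝ) (hν : 0 < ν) (hlam : 0 < lam)
    (A : l2Z →L[ℝ] l2Z)
    (hA : ∀ (u : l2Z) (i : ℤ), A u i = -u (i - 1) + 2 * u i - u (i + 1))
    (g : l2Z)
    (f : ℝ → ℝ) (hf : ContDiff ℝ 1 f) (hf0 : f 0 = 0)
    (hmono : ∀ x y : ℝ, 0 ≤ (f x - f y) * (x - y))
    (Cf : ℝ) (hCf : 0 < Cf) (p : ℕ) (hp : 1 ≤ p)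
    (hgrowth : ∀ x : ℝ, |f x| ≤ Cf * |x| * (1 + x ^ (2 * p)))
    (F : l2Z → l2Z) (hF : ∀ (u : l2Z) (i : ℤ), F u i = f (u i))
    (T : ℝ) (hT : 0 < T)
    (w : ℝ → l2Z) (hw : ContinuousOn w (Icc 0 T)) (hw0 : w 0 = 0)
    (v₀ : l2Z) :
    ∃ v : ℝ → l2Z,
      (ContinuousOn v (Icc 0 T) ∧
        ∀ t ∈ Icc (0 : ℝ) T,
          v t = v₀ + ∫ s in (0 : ℝ)..t,
            (-(ν • A (v s)) - lam • v s - F (v s + w s) + g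
              - ν • A (w s) - lam • w s)) ∧
      ∀ v₂ : ℝ → l2Z,
        (ContinuousOn v₂ (Icc 0 T) ∧
          ∀ t ∈ Icc (0 : ℝ) T,
            v₂ t = v₀ + ∫ s in (0 : ℝ)..t,
              (-(ν • A (v₂ s)) - lam • v₂ s - F (v₂ s + w s) + g
                - ν • A (w s) - lam • w s)) →
        EqOn v₂ v (Icc 0 T) :=
  lattice_existence_uniqueness_general ν lam A g f hf hmono F hF T hT w hw v₀
end
end

section
/- Let λ > 0 and let K(t,s) = (1/(2λ)) ( e^{−λ|t−s|} − e^{−λ(t+s)} ) for s,t ∈ [0,1]. Let μ ≠ 0 be a real number and let h : [0,1] → ℝ be a continuous function satisfying ∫₀¹ K(t,s) h(t) dt = μ h(s) for all s ∈ [0,1]. Then h is twice continuously differentiable on [0,1] and satisfies (λ²μ − 1) h(s) = μ h″(s) for all s ∈ [0,1], together with the boundary conditions h(0) = 0 and λ h(1) = −h′(1). -/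
/-!
On `[0,1]²` the kernel factorises as `K(t,s) = sinh(λ min(t,s)) e^{-λ max(t,s)} / λ`, so
`λ ∫₀¹ K(t,s) h(t) dt = u(s) := e^{-λs} ∫₀ˢ sinh(λt) h(t) dt + sinh(λs) ∫ₛ¹ e^{-λt} h(t) dt`.
Differentiating in the limits of integration, the boundary terms cancel and
`u' = λ v`, `v' = λ u - h` with `v(s) := -e^{-λs} ∫₀ˢ sinh(λt) h(t) dt + cosh(λs) ∫ₛ¹ e^{-λt} h(t) dt`,
because `e^{-λs} (sinh + cosh)(λs) = 1`. Hence `μ h = u / λ` is `C²` with `μ h'' = λ² μ h - h`,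
and `u(0) = 0`, `u(1) = -v(1)` are the boundary conditions. To apply the fundamental theorem of
calculus at the endpoints, `h` is first extended continuously to `ℝ`.
-/

open Real intervalIntegral Set

noncomputable def ornsteinUhlenbeckCov (lam t s : ℝ) : ℝ :=
  1 / (2 * lam) * (exp (-lam * |t - s|) - exp (-lam * (t + s)))

theorem ornsteinUhlenbeckCov_of_le {lam t s : ℝ} (hlam : lam ≠ 0) (hts : t ≤ s) :
    ornsteinUhlenbeckCov lam t s = exp (-(lam * s)) * sinh (lam * t) / lam := by
  rw [ornsteinUhlenbeckCov, abs_of_nonpos (sub_nonpos.mpr hts), sinh_eq,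
    show -lam * -(t - s) = -(lam * s) + lam * t by ring,
    show -lam * (t + s) = -(lam * s) + -(lam * t) by ring, exp_add, exp_add]
  field_simp

theorem ornsteinUhlenbeckCov_of_ge {lam t s : ℝ} (hlam : lam ≠ 0) (hst : s ≤ t) :
    ornsteinUhlenbeckCov lam t s = sinh (lam * s) * exp (-(lam * t)) / lam := by
  rw [ornsteinUhlenbeckCov, abs_of_nonneg (sub_nonneg.mpr hst), sinh_eq,
    show -lam * (t - s) = lam * s + -(lam * t) by ring,
    show -lam * (t + s) = -(lam * s) + -(lam * t) by ring, exp_add, exp_add]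
  field_simp

noncomputable def greenPotential (lam : ℝ) (f : ℝ → ℝ) (s : ℝ) : ℝ :=
  exp (-(lam * s)) * (∫ t in (0 : ℝ)..s, sinh (lam * t) * f t) +
    sinh (lam * s) * ∫ t in s..1, exp (-(lam * t)) * f t

noncomputable def greenFlux (lam : ℝ) (f : ℝ → ℝ) (s : ℝ) : ℝ :=
  -exp (-(lam * s)) * (∫ t in (0 : ℝ)..s, sinh (lam * t) * f t) +
    cosh (lam * s) * ∫ t in s..1, exp (-(lam * t)) * f t

section

variable {lam : ℝ} {f : ℝ → ℝ}

theorem integral_ornsteinUhlenbeckCov_mul (hlam : lam ≠ 0) (hf : Continuous f) {s : ℝ}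
    (hs : s ∈ Icc (0 : ℝ) 1) :
    ∫ t in (0 : ℝ)..1, ornsteinUhlenbeckCov lam t s * f t = greenPotential lam f s / lam := by
  have hint : ∀ a b : ℝ, IntervalIntegrable (fun t => ornsteinUhlenbeckCov lam t s * f t)
      MeasureTheory.volume a b := fun a b =>
    (by unfold ornsteinUhlenbeckCov; fun_prop : Continuous _).intervalIntegrable a b
  have lower : ∫ t in (0 : ℝ)..s, ornsteinUhlenbeckCov lam t s * f t =
      ∫ t in (0 : ℝ)..s, exp (-(lam * s)) / lam * (sinh (lam * t) * f t) := by
    refine integral_congr fun t ht => ?_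
    rw [uIcc_of_le hs.1] at ht
    simp only [ornsteinUhlenbeckCov_of_le hlam ht.2]
    ring
  have upper : ∫ t in s..1, ornsteinUhlenbeckCov lam t s * f t =
      ∫ t in s..1, sinh (lam * s) / lam * (exp (-(lam * t)) * f t) := by
    refine integral_congr fun t ht => ?_
    rw [uIcc_of_le hs.2] at ht
    simp only [ornsteinUhlenbeckCov_of_ge hlam ht.1]
    ring
  rw [← integral_add_adjacent_intervals (hint 0 s) (hint s 1), lower, upper,
    integral_const_mul, integral_const_mul, greenPotential]
  ring

theorem hasDerivAt_integral_sinh_mul (hf : Continuous f) (s : ℝ) :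
    HasDerivAt (fun s => ∫ t in (0 : ℝ)..s, sinh (lam * t) * f t) (sinh (lam * s) * f s) s :=
  (Continuous.integral_hasStrictDerivAt (by fun_prop) 0 s).hasDerivAt

theorem hasDerivAt_integral_exp_mul (hf : Continuous f) (s : ℝ) :
    HasDerivAt (fun s => ∫ t in s..1, exp (-(lam * t)) * f t) (-(exp (-(lam * s)) * f s)) s := by
  have : (fun s => ∫ t in s..1, exp (-(lam * t)) * f t) =
      fun s => -∫ t in (1 : ℝ)..s, exp (-(lam * t)) * f t := funext fun s => integral_symm 1 s
  rw [this]
  exact (Continuous.integral_hasStrictDerivAt (by fun_prop) 1 s).hasDerivAt.neg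

theorem hasDerivAt_exp_neg_mul (s : ℝ) :
    HasDerivAt (fun s => exp (-(lam * s))) (-(lam * exp (-(lam * s)))) s := by
  simpa [mul_comm] using ((hasDerivAt_id s).const_mul lam).neg.exp

theorem hasDerivAt_greenPotential (hf : Continuous f) (s : ℝ) :
    HasDerivAt (greenPotential lam f) (lam * greenFlux lam f s) s := by
  have hsinh : HasDerivAt (fun s => sinh (lam * s)) (cosh (lam * s) * lam) s := by
    simpa using ((hasDerivAt_id s).const_mul lam).sinh
  refine (((hasDerivAt_exp_neg_mul s).mul (hasDerivAt_integral_sinh_mul hf s)).add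
    (hsinh.mul (hasDerivAt_integral_exp_mul hf s))).congr_deriv ?_
  rw [greenFlux]
  ring

theorem hasDerivAt_greenFlux (hf : Continuous f) (s : ℝ) :
    HasDerivAt (greenFlux lam f) (lam * greenPotential lam f s - f s) s := by
  have hcosh : HasDerivAt (fun s => cosh (lam * s)) (sinh (lam * s) * lam) s := by
    simpa using ((hasDerivAt_id s).const_mul lam).cosh
  refine (((hasDerivAt_exp_neg_mul s).neg.mul (hasDerivAt_integral_sinh_mul hf s)).add
    (hcosh.mul (hasDerivAt_integral_exp_mul hf s))).congr_deriv ?_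
  have hexp : exp (-(lam * s)) * (sinh (lam * s) + cosh (lam * s)) = 1 := by
    rw [sinh_add_cosh, ← exp_add, neg_add_cancel, exp_zero]
  simp only [Pi.neg_apply, greenPotential]
  linear_combination -f s * hexp

theorem greenPotential_zero : greenPotential lam f 0 = 0 := by
  simp [greenPotential]

theorem greenPotential_one_add_greenFlux_one : greenPotential lam f 1 + greenFlux lam f 1 = 0 := by
  simp only [greenPotential, greenFlux, integral_same]
  ring

end

theorem exists_continuous_eqOn_Icc {a b : ℝ} (hab : a ≤ b) {h : ℝ → ℝ}
    (hcont : ContinuousOn h (Icc a b)) : ∃ f : ℝ → ℝ, Continuous f ∧ EqOn f h (Icc a b) :=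
  ⟨IccExtend hab ((Icc a b).domRestrict h), hcont.domRestrict.Icc_extend',
    fun _ hx => IccExtend_of_mem hab _ hx⟩

theorem eqOn_greenPotential_div_of_eigen {lam μ : ℝ} {f h : ℝ → ℝ} (hlam : lam ≠ 0) (hμ : μ ≠ 0)
    (hf : Continuous f) (hfh : EqOn f h (Icc 0 1))
    (heig : ∀ s ∈ Icc (0 : ℝ) 1, ∫ t in (0 : ℝ)..1, ornsteinUhlenbeckCov lam t s * h t = μ * h s) :
    ∀ s ∈ Icc (0 : ℝ) 1, h s = greenPotential lam f s / (lam * μ) := by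
  intro s hs
  have hint : ∫ t in (0 : ℝ)..1, ornsteinUhlenbeckCov lam t s * f t = μ * h s := by
    rw [← heig s hs]
    refine integral_congr fun t ht => ?_
    rw [uIcc_of_le zero_le_one] at ht
    simp only [hfh ht]
  rw [integral_ornsteinUhlenbeckCov_mul hlam hf hs, div_eq_iff hlam] at hint
  rw [eq_div_iff (mul_ne_zero hlam hμ)]
  linear_combination -hint

/-- Let `λ > 0`,
`K(t,s) = (1/(2λ))(e^{−λ|t−s|} − e^{−λ(t+s)})`, `μ ≠ 0`, and let `h` be
continuous on `[0,1]` with `∫₀¹ K(t,s) h(t) dt = μ h(s)` for all `s ∈ [0,1]`.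
Then `h` is twice continuously differentiable on `[0,1]` and satisfies
`(λ²μ − 1) h(s) = μ h″(s)` on `[0,1]`, with `h(0) = 0` and `λ h(1) = −h′(1)`. -/
theorem eigenfunction_ode_of_kernel (lam : ℝ) (hlam : 0 < lam)
    (μ : ℝ) (hμ : μ ≠ 0) (h : ℝ → ℝ) (hcont : ContinuousOn h (Icc 0 1))
    (heig : ∀ s ∈ Icc (0 : ℝ) 1,
      (∫ t in (0 : ℝ)..1,
          (1 / (2 * lam)) *
            (Real.exp (-lam * |t - s|) - Real.exp (-lam * (t + s))) * h t)
        = μ * h s) :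
    ∃ h' h'' : ℝ → ℝ,
      (∀ s ∈ Icc (0 : ℝ) 1, HasDerivWithinAt h (h' s) (Icc 0 1) s) ∧
      (∀ s ∈ Icc (0 : ℝ) 1, HasDerivWithinAt h' (h'' s) (Icc 0 1) s) ∧
      ContinuousOn h' (Icc 0 1) ∧ ContinuousOn h'' (Icc 0 1) ∧
      (∀ s ∈ Icc (0 : ℝ) 1, (lam ^ 2 * μ - 1) * h s = μ * h'' s) ∧
      h 0 = 0 ∧ lam * h 1 = -h' 1 := by
  obtain ⟨f, hf, hfh⟩ := exists_continuous_eqOn_Icc zero_le_one hcont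
  have hu := eqOn_greenPotential_div_of_eigen hlam.ne' hμ hf hfh heig
  have hu_cont : Continuous (greenPotential lam f) :=
    continuous_iff_continuousAt.2 fun s => (hasDerivAt_greenPotential hf s).continuousAt
  have hv_cont : Continuous (greenFlux lam f) :=
    continuous_iff_continuousAt.2 fun s => (hasDerivAt_greenFlux hf s).continuousAt
  refine ⟨fun s => greenFlux lam f s / μ, fun s => (lam * greenPotential lam f s - f s) / μ,
    fun s hs => ?_, fun s _ => ((hasDerivAt_greenFlux hf s).div_const μ).hasDerivWithinAt,
    (hv_cont.div_const μ).continuousOn, by fun_prop, fun s hs => ?_, ?_, ?_⟩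
  · refine ((hasDerivAt_greenPotential hf s).div_const (lam * μ)).hasDerivWithinAt.congr_of_mem
      hu hs |>.congr_deriv ?_
    field_simp
  · dsimp only
    rw [hfh hs, hu s hs]
    field_simp
  · rw [hu 0 ⟨le_rfl, zero_le_one⟩, greenPotential_zero, zero_div]
  · dsimp only
    rw [hu 1 ⟨zero_le_one, le_rfl⟩]
    field_simp
    linear_combination greenPotential_one_add_greenFlux_one
end

section
/- Let λ > 0, and let γ > 0 satisfy tan(γ) = −γ/λ (with cos(γ) ≠ 0). Set μ = 1/(λ² + γ²) and h(s) = sin(γ s). Then for all s ∈ [0,1]: ∫₀¹ K(t,s) h(t) dt = μ h(s), where K(t,s) = (1/(2λ)) ( e^{−λ|t−s|} − e^{−λ(t+s)} ). That is, sin(γ·) is an eigenfunction of the integral operator with kernel K with eigenvalue 1/(λ² + γ²). -/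
/-!
On each side of the diagonal the kernel factors as `e^{-λ max(t,s)} sinh(λ min(t,s)) / λ`, so
the integral reduces to integrals of `e^{±λt} sin(γt)`, which have the explicit primitive
`e^{ct} (c sin(γt) - γ cos(γt)) / (c² + γ²)`. The boundary term at `t = 1` is proportional to
`λ sin γ + γ cos γ`, which vanishes exactly because `tan γ = -γ/λ`; the remaining terms combine
to `sin(γs) / (λ² + γ²)`.
-/

open Real intervalIntegral Set

theorem hasDerivAt_exp_mul_sin_primitive (c γ t : ℝ) :
    HasDerivAt (fun t => exp (c * t) * (c * sin (γ * t) - γ * cos (γ * t)))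
      ((c ^ 2 + γ ^ 2) * (exp (c * t) * sin (γ * t))) t := by
  have hexp := ((hasDerivAt_id t).const_mul c).exp
  have hsin := ((hasDerivAt_id t).const_mul γ).sin
  have hcos := ((hasDerivAt_id t).const_mul γ).cos
  refine (hexp.mul ((hsin.const_mul c).sub (hcos.const_mul γ))).congr_deriv ?_
  simp only [id, mul_one, Pi.sub_apply]
  ring

theorem integral_exp_mul_sin (c γ a b : ℝ) (h : c ^ 2 + γ ^ 2 ≠ 0) :
    ∫ t in a..b, exp (c * t) * sin (γ * t) =
      (exp (c * b) * (c * sin (γ * b) - γ * cos (γ * b)) -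
        exp (c * a) * (c * sin (γ * a) - γ * cos (γ * a))) / (c ^ 2 + γ ^ 2) := by
  rw [eq_div_iff h, mul_comm, ← integral_const_mul,
    integral_eq_sub_of_hasDerivAt (fun t _ => hasDerivAt_exp_mul_sin_primitive c γ t)
      ((by fun_prop : Continuous _).intervalIntegrable _ _)]

theorem expKernel_eq_of_le {lam t s : ℝ} (h : t ≤ s) :
    1 / (2 * lam) * (exp (-lam * |t - s|) - exp (-lam * (t + s))) =
      exp (-lam * s) / (2 * lam) * (exp (lam * t) - exp (-lam * t)) := by
  rw [abs_of_nonpos (sub_nonpos.2 h), show -lam * -(t - s) = -lam * s + lam * t by ring,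
    show -lam * (t + s) = -lam * s + -lam * t by ring, exp_add, exp_add]
  ring

theorem expKernel_eq_of_ge {lam t s : ℝ} (h : s ≤ t) :
    1 / (2 * lam) * (exp (-lam * |t - s|) - exp (-lam * (t + s))) =
      (exp (lam * s) - exp (-lam * s)) / (2 * lam) * exp (-lam * t) := by
  rw [abs_of_nonneg (sub_nonneg.2 h), show -lam * (t - s) = lam * s + -lam * t by ring,
    show -lam * (t + s) = -lam * s + -lam * t by ring, exp_add, exp_add]
  ring

theorem mul_sin_add_mul_cos_eq_zero_of_tan_eq {lam γ : ℝ} (hlam : lam ≠ 0) (hcos : cos γ ≠ 0)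
    (htan : tan γ = -γ / lam) : lam * sin γ + γ * cos γ = 0 := by
  rw [tan_eq_sin_div_cos, div_eq_div_iff hcos hlam] at htan
  linarith

section KernelIntegral

variable (lam γ : ℝ) {s : ℝ}

theorem integral_expKernel_mul_sin_of_le (hs : 0 ≤ s) :
    ∫ t in (0 : ℝ)..s, 1 / (2 * lam) * (exp (-lam * |t - s|) - exp (-lam * (t + s))) * sin (γ * t) =
      exp (-lam * s) / (2 * lam) *
        ((∫ t in (0 : ℝ)..s, exp (lam * t) * sin (γ * t)) -
          ∫ t in (0 : ℝ)..s, exp (-lam * t) * sin (γ * t)) := by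
  rw [← integral_sub ((by fun_prop : Continuous _).intervalIntegrable _ _)
      ((by fun_prop : Continuous _).intervalIntegrable _ _), ← integral_const_mul]
  refine integral_congr fun t ht => ?_
  rw [uIcc_of_le hs] at ht
  simp only [expKernel_eq_of_le ht.2]
  ring

theorem integral_expKernel_mul_sin_of_ge (hs : s ≤ 1) :
    ∫ t in s..1, 1 / (2 * lam) * (exp (-lam * |t - s|) - exp (-lam * (t + s))) * sin (γ * t) =
      (exp (lam * s) - exp (-lam * s)) / (2 * lam) * ∫ t in s..1, exp (-lam * t) * sin (γ * t) := by
  rw [← integral_const_mul]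
  refine integral_congr fun t ht => ?_
  rw [uIcc_of_le hs] at ht
  simp only [expKernel_eq_of_ge ht.1]
  ring

end KernelIntegral

theorem sin_eigenfunction_of_kernel_general (lam γ : ℝ) (hlam : 0 < lam)
    (hcos : Real.cos γ ≠ 0) (htan : Real.tan γ = -γ / lam) :
    ∀ s ∈ Icc (0 : ℝ) 1,
      (∫ t in (0 : ℝ)..1,
          (1 / (2 * lam)) *
            (Real.exp (-lam * |t - s|) - Real.exp (-lam * (t + s))) *
            Real.sin (γ * t))
        = (1 / (lam ^ 2 + γ ^ 2)) * Real.sin (γ * s) := by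
  rintro s ⟨hs0, hs1⟩
  have hD : lam ^ 2 + γ ^ 2 ≠ 0 := by positivity
  have hD' : (-lam) ^ 2 + γ ^ 2 ≠ 0 := by rwa [neg_sq]
  have hbdry := mul_sin_add_mul_cos_eq_zero_of_tan_eq hlam.ne' hcos htan
  rw [← integral_add_adjacent_intervals ((by fun_prop : Continuous _).intervalIntegrable 0 s)
      ((by fun_prop : Continuous _).intervalIntegrable s 1),
    integral_expKernel_mul_sin_of_le lam γ hs0, integral_expKernel_mul_sin_of_ge lam γ hs1,
    integral_exp_mul_sin _ _ _ _ hD, integral_exp_mul_sin _ _ _ _ hD', integral_exp_mul_sin _ _ _ _ hD']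
  simp only [mul_one, mul_zero, sin_zero, cos_zero, exp_zero, neg_sq]
  rw [show -lam * sin γ - γ * cos γ = -(lam * sin γ + γ * cos γ) by ring, hbdry, neg_mul lam s, exp_neg]
  field_simp
  ring

/-- Let `λ > 0` and `γ > 0` with `cos γ ≠ 0` and
`tan γ = −γ/λ`. Set `μ = 1/(λ² + γ²)`. Then `sin(γ·)` is an eigenfunction of
the integral operator with kernel
`K(t,s) = (1/(2λ))(e^{−λ|t−s|} − e^{−λ(t+s)})` with eigenvalue `μ`:
`∫₀¹ K(t,s) sin(γt) dt = μ sin(γs)` for all `s ∈ [0,1]`. -/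
theorem sin_eigenfunction_of_kernel (lam γ : ℝ) (hlam : 0 < lam) (hγ : 0 < γ)
    (hcos : Real.cos γ ≠ 0) (htan : Real.tan γ = -γ / lam) :
    ∀ s ∈ Icc (0 : ℝ) 1,
      (∫ t in (0 : ℝ)..1,
          (1 / (2 * lam)) *
            (Real.exp (-lam * |t - s|) - Real.exp (-lam * (t + s))) *
            Real.sin (γ * t))
        = (1 / (lam ^ 2 + γ ^ 2)) * Real.sin (γ * s) :=
  sin_eigenfunction_of_kernel_general lam γ hlam hcos htan
end
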